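/- Let {(W_i, ω_i)} and {(V_i, ν_i)} be fusion frames for H with W_i ⊥ V_i for every i. Then Σ ω_i ν_i π_{S_W V_i} S_W⁻¹ π_{W_i} f = 0 for all f ∈ H; in particular {(S_W V_i, ν_i)} cannot be a dual fusion frame of {(W_i, ω_i)}. -/

import Mathlib

/-!
The frame operator `S_W = ∑ ω_i² π_{W_i}` is symmetric, being a convergent sum of symmetric
operators. Hence for `w ∈ W_i` and `v ∈ V_i` we get `⟪S_W⁻¹ w, S_W v⟫ = ⟪w, v⟫ = 0`, so
`S_W⁻¹ π_{W_i} f ⊥ S_W V_i` and every summand `π_{S_W V_i} S_W⁻¹ π_{W_i} f` vanishes. The sum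
is therefore `0`, which differs from `f` as soon as `f ≠ 0`.
-/

open scoped InnerProductSpace

/-- Orthogonal projection onto a complete subspace, as an operator `H →L H`. -/
noncomputable def fusionProj {H : Type*} [NormedAddCommGroup H] [InnerProductSpace ℂ H]
    (K : Submodule ℂ H) [CompleteSpace K] : H →L[ℂ] H :=
  K.subtypeL.comp (K.orthogonalProjectionOnto)

theorem fusionProj_eq_starProjection {H : Type*} [NormedAddCommGroup H] [InnerProductSpace ℂ H]
    (K : Submodule ℂ H) [CompleteSpace K] : fusionProj K = K.starProjection :=
  rfl

section

variable {𝕜 E : Type*} [RCLike 𝕜] [NormedAddCommGroup E] [InnerProductSpace 𝕜 E]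

theorem LinearMap.IsSymmetric.of_hasSum {ι : Type*} {P : ι → E →ₗ[𝕜] E}
    (hP : ∀ i, (P i).IsSymmetric) {T : E →ₗ[𝕜] E} (hT : ∀ x, HasSum (fun i => P i x) (T x)) :
    T.IsSymmetric := by
  intro x y
  have hx := (hT x).map (innerSLFlip 𝕜 y) (innerSLFlip 𝕜 y).continuous
  have hy := (hT y).mapL (innerSL 𝕜 x)
  simp only [Function.comp_def, innerSLFlip_apply_apply, innerSL_apply_apply, hP _ x y] at hx hy
  exact hx.unique hy

theorem Submodule.IsOrtho.map_symm_map {U V : Submodule 𝕜 E} (hUV : U ⟂ V) {S : E ≃L[𝕜] E}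
    (hS : ((S : E →L[𝕜] E) : E →ₗ[𝕜] E).IsSymmetric) :
    U.map ((S.symm : E →L[𝕜] E) : E →ₗ[𝕜] E) ⟂ V.map ((S : E →L[𝕜] E) : E →ₗ[𝕜] E) := by
  rw [isOrtho_iff_inner_eq] at hUV ⊢
  rintro _ ⟨u, hu, rfl⟩ _ ⟨v, hv, rfl⟩
  have := hS (S.symm u) v
  simp only [ContinuousLinearMap.coe_coe, ContinuousLinearEquiv.coe_coe,
    ContinuousLinearEquiv.apply_symm_apply] at this ⊢
  rw [← this, hUV u hu v hv]

theorem Submodule.IsOrtho.starProjection_map_symm_apply_eq_zero {U V : Submodule 𝕜 E}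
    (hUV : U ⟂ V) {S : E ≃L[𝕜] E} (hS : ((S : E →L[𝕜] E) : E →ₗ[𝕜] E).IsSymmetric)
    [(V.map ((S : E →L[𝕜] E) : E →ₗ[𝕜] E)).HasOrthogonalProjection] {u : E} (hu : u ∈ U) :
    (V.map ((S : E →L[𝕜] E) : E →ₗ[𝕜] E)).starProjection (S.symm u) = 0 :=
  (starProjection_apply_eq_zero_iff _).mpr <|
    isOrtho_iff_le.mp (hUV.map_symm_map hS) (mem_map_of_mem hu)

end

theorem orthogonal_image_cannot_be_dual_general
    {H : Type*} [NormedAddCommGroup H] [InnerProductSpace ℂ H]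
    [Nontrivial H]
    {ι : Type*} (W V : ι → Submodule ℂ H) [∀ i, CompleteSpace (W i)]
    (ω ν : ι → ℝ)
    (hperp : ∀ i, ∀ w ∈ W i, ∀ v ∈ V i, ⟪w, v⟫_ℂ = 0)
    (SW : H ≃L[ℂ] H)
    (hSW : ∀ f : H, HasSum (fun i => ((ω i) ^ 2 : ℝ) • fusionProj (W i) f) (SW f))
    [∀ i, CompleteSpace ((V i).map (((SW : H →L[ℂ] H) : H →ₗ[ℂ] H)))] :
    (∀ f : H,
      HasSum (fun i => (ω i * ν i) •
        fusionProj ((V i).map (((SW : H →L[ℂ] H) : H →ₗ[ℂ] H)))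
          (SW.symm (fusionProj (W i) f))) 0) ∧
    ¬ (∀ f : H,
      HasSum (fun i => (ω i * ν i) •
        fusionProj ((V i).map (((SW : H →L[ℂ] H) : H →ₗ[ℂ] H)))
          (SW.symm (fusionProj (W i) f))) f) := by
  have hS : ((SW : H →L[ℂ] H) : H →ₗ[ℂ] H).IsSymmetric :=
    LinearMap.IsSymmetric.of_hasSum
      (P := fun i => ((ω i ^ 2 : ℝ) : ℂ) • (W i).starProjection.toLinearMap)
      (fun i => (W i).starProjection_isSymmetric.smul (RCLike.conj_ofReal _)) fun f =>
        (hSW f).congr_fun fun _ => RCLike.real_smul_eq_coe_smul (K := ℂ) _ _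
  have hzero (i : ι) (f : H) : fusionProj ((V i).map (((SW : H →L[ℂ] H) : H →ₗ[ℂ] H)))
      (SW.symm (fusionProj (W i) f)) = 0 := by
    simp only [fusionProj_eq_starProjection]
    exact (Submodule.isOrtho_iff_inner_eq.mpr (hperp i)).starProjection_map_symm_apply_eq_zero hS
      ((W i).starProjection_apply_mem f)
  simp only [hzero, smul_zero]
  refine ⟨fun _ => hasSum_zero, fun hdual => ?_⟩
  obtain ⟨f, hf⟩ := exists_ne (0 : H)
  exact hf ((hdual f).unique hasSum_zero)

/-- Let `{(W i, ω i)}` and `{(V i, ν i)}` be fusion frames with `W i ⊥ V i` for all `i`.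
Then `∑ ω i ν i • π_{S_W V i} S_W⁻¹ π_{W i} f = 0` for all `f`; in particular
`{(S_W V i, ν i)}` cannot be a dual fusion frame of `{(W i, ω i)}`. -/
theorem orthogonal_image_cannot_be_dual
    {H : Type*} [NormedAddCommGroup H] [InnerProductSpace ℂ H] [CompleteSpace H]
    [Nontrivial H]
    {ι : Type*} (W V : ι → Submodule ℂ H) [∀ i, CompleteSpace (W i)]
    [∀ i, CompleteSpace (V i)]
    (ω ν : ι → ℝ) (hω : ∀ i, 0 < ω i) (hν : ∀ i, 0 < ν i)
    (A B A' B' : ℝ) (hA : 0 < A) (hAB : A ≤ B) (hA' : 0 < A') (hAB' : A' ≤ B')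
    (hWframe : ∀ f : H,
      A * ‖f‖ ^ 2 ≤ ∑' i, (ω i) ^ 2 * ‖fusionProj (W i) f‖ ^ 2 ∧
        ∑' i, (ω i) ^ 2 * ‖fusionProj (W i) f‖ ^ 2 ≤ B * ‖f‖ ^ 2)
    (hVframe : ∀ f : H,
      A' * ‖f‖ ^ 2 ≤ ∑' i, (ν i) ^ 2 * ‖fusionProj (V i) f‖ ^ 2 ∧
        ∑' i, (ν i) ^ 2 * ‖fusionProj (V i) f‖ ^ 2 ≤ B' * ‖f‖ ^ 2)
    (hperp : ∀ i, ∀ w ∈ W i, ∀ v ∈ V i, ⟪w, v⟫_ℂ = 0)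
    (SW : H ≃L[ℂ] H)
    (hSW : ∀ f : H, HasSum (fun i => ((ω i) ^ 2 : ℝ) • fusionProj (W i) f) (SW f))
    [∀ i, CompleteSpace ((V i).map (((SW : H →L[ℂ] H) : H →ₗ[ℂ] H)))] :
    (∀ f : H,
      HasSum (fun i => (ω i * ν i) •
        fusionProj ((V i).map (((SW : H →L[ℂ] H) : H →ₗ[ℂ] H)))
          (SW.symm (fusionProj (W i) f))) 0) ∧
    ¬ (∀ f : H,
      HasSum (fun i => (ω i * ν i) •
        fusionProj ((V i).map (((SW : H →L[ℂ] H) : H →ₗ[ℂ] H)))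
          (SW.symm (fusionProj (W i) f))) f) :=
  orthogonal_image_cannot_be_dual_general W V ω ν hperp SW hSW
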